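/- Let Γ be a connected elliptic weighted graph which is log canonical and such that every external component is attached to the graph, i.e. for every j ∈ J one has ∑_{i∈I} t_{ji} ≥ 1. Then the sum of the external coefficients satisfies ∑_{j∈J} b_j ≤ 2. -/

import Mathlib

/-!
Write `c_k = B · E_k` and `K_k = K · E_k = 2 g_k - 2 - E_k²` (adjunction), so that
`c_k = ∑ i, (a_i - 1) (E_i · E_k) - K_k`, and let `Q` be the quadratic form of the intersection
matrix. If no `E_k` is a `(-1)`-curve of genus `0`, then `K_k ≥ 0` for all `k`, and weighting by
`a_k + 1 ≥ 1` gives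
`∑ c_k ≤ ∑ (a_k + 1) c_k = Q(a) - Q(1) - ∑ (a_k + 1) K_k ≤ -Q(1) - ∑ K_k
  = 2n - 2 ∑ g_k - ∑_{i ≠ k} E_i · E_k ≤ 2`,
because `Q(a) ≤ 0` by negative definiteness and a connected graph on `n` vertices has at least
`n - 1` edges. Otherwise contract a `(-1)`-curve `E_e`: the new configuration is again connected,
negative definite and log canonical with the same log discrepancies, its boundary degrees are
`c_k + m_k c_e + m_k (m_k - 1)` with `m_k = E_k · E_e ≥ 0`, and since `E_e` meets another curve
the total boundary degree does not decrease. Induct on the number of curves.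
-/

open Finset

/-- A weighted graph: a finite vertex set `Fin n`, genera `g`, a symmetric integer
intersection matrix `M` with nonnegative off-diagonal entries and diagonal entries `≤ -1`
(the weight of vertex `i` is `-M i i`), and an external part consisting of `s` external
components with rational coefficients `0 < b j ≤ 1` and intersection numbers `t j i`. -/
structure WGraph where
  n : ℕ
  npos : 0 < n
  M : Matrix (Fin n) (Fin n) ℤ
  g : Fin n → ℕ
  s : ℕ
  b : Fin s → ℚ
  t : Fin s → Fin n → ℕ
  symm : ∀ i k, M i k = M k i
  offdiag_nonneg : ∀ i k, i ≠ k → 0 ≤ M i k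
  diag_le : ∀ i, M i i ≤ -1
  b_pos : ∀ j, 0 < b j
  b_le_one : ∀ j, b j ≤ 1

namespace WGraph

/-- The external contribution `c_i = ∑_j b_j t_{ji}`. -/
def extc (Γ : WGraph) (i : Fin Γ.n) : ℚ := ∑ j, Γ.b j * (Γ.t j i : ℚ)

/-- `Γ` is elliptic: its intersection matrix is negative definite. -/
def Elliptic (Γ : WGraph) : Prop :=
  ∀ v : Fin Γ.n → ℝ, v ≠ 0 → ∑ i, ∑ k, v i * (Γ.M i k : ℝ) * v k < 0

/-- `Γ` is minimal: no vertex of genus `0` and weight `1`. -/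
def IsMinimal (Γ : WGraph) : Prop := ∀ i, ¬ (Γ.g i = 0 ∧ Γ.M i i = -1)

/-- `Γ` is connected: the graph with an edge `{i,k}` whenever `M i k > 0` is connected. -/
def Connected (Γ : WGraph) : Prop :=
  (SimpleGraph.fromRel (fun i k : Fin Γ.n => 0 < Γ.M i k)).Connected

/-- `a` is the (unique, when `M` is invertible) system of log discrepancies of `Γ`:
`∑_i a_i M_{ik} = (2 g_k − 2 − M_{kk}) + c_k + ∑_i M_{ik}` for all `k`. -/
def IsDiscr (Γ : WGraph) (a : Fin Γ.n → ℝ) : Prop :=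
  ∀ k, ∑ i, a i * (Γ.M i k : ℝ) =
    (2 * (Γ.g k : ℝ) - 2 - (Γ.M k k : ℝ)) + (Γ.extc k : ℝ) + ∑ i, (Γ.M i k : ℝ)

/-- `Γ` is a Du Val graph: all genera `0`, all weights `2`, empty external contribution. -/
def DuVal (Γ : WGraph) : Prop :=
  ∀ i, Γ.g i = 0 ∧ Γ.M i i = -2 ∧ Γ.extc i = 0

/-- The minimal log discrepancy `pld` of a system of log discrepancies `a`. -/
def pld (Γ : WGraph) (a : Fin Γ.n → ℝ) : ℝ :=
  Finset.univ.inf' ⟨⟨0, Γ.npos⟩, Finset.mem_univ _⟩ a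

/-- `Γ'` is a subgraph of `Γ` via the injection `e` of vertex sets:
off-diagonal entries, weights, genera and external contributions of `Γ'` are dominated by
the corresponding ones of `Γ`. -/
def SubgraphVia (Γ' Γ : WGraph) (e : Fin Γ'.n → Fin Γ.n) : Prop :=
  Function.Injective e ∧
  (∀ i k : Fin Γ'.n, i ≠ k → Γ'.M i k ≤ Γ.M (e i) (e k)) ∧
  (∀ i, Γ.M (e i) (e i) ≤ Γ'.M i i) ∧
  (∀ i, Γ'.g i ≤ Γ.g (e i)) ∧
  (∀ i, Γ'.extc i ≤ Γ.extc (e i))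

/-- The subgraph `Γ'` (via `e`) differs from `Γ`. -/
def ProperVia (Γ' Γ : WGraph) (e : Fin Γ'.n → Fin Γ.n) : Prop :=
  ¬ (Function.Surjective e ∧
     (∀ i k : Fin Γ'.n, Γ'.M i k = Γ.M (e i) (e k)) ∧
     (∀ i, Γ'.g i = Γ.g (e i)) ∧
     (∀ i, Γ'.extc i = Γ.extc (e i)))

end WGraph

/-- Order on coefficient tuples: `B ≤ B'` iff `B` is at least as long as `B'` and
coordinatewise `B j ≤ B' j` on the common indices. -/
def TupleLE {α : Type*} [LE α] {s t : ℕ} (B : Fin s → α) (B' : Fin t → α) : Prop :=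
  ∃ h : t ≤ s, ∀ j : Fin t, B (Fin.castLE h j) ≤ B' j

/-- Strict order on coefficient tuples: `B < B'` iff `B ≤ B'` and moreover `B` is strictly
longer or some coordinate inequality is strict. -/
def TupleLT {α : Type*} [Preorder α] {s t : ℕ} (B : Fin s → α) (B' : Fin t → α) : Prop :=
  TupleLE B B' ∧ (t < s ∨ ∃ h : t ≤ s, ∃ j : Fin t, B (Fin.castLE h j) < B' j)

namespace Matrix

variable {ι : Type*} {M : Matrix ι ι ℤ} {e : ι}

def dualGraph (M : Matrix ι ι ℤ) : SimpleGraph ι := SimpleGraph.fromRel fun i k => 0 < M i k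

theorem dualGraph_adj (hM : ∀ i k, M i k = M k i) {i k : ι} :
    M.dualGraph.Adj i k ↔ i ≠ k ∧ 0 < M i k := by
  simp [dualGraph, SimpleGraph.fromRel_adj, hM k i]

/-- Intersection matrix after contracting the `(-1)`-curve `E_e`: the pull-back of the image
of `E_i` is `E_i + (E_i · E_e) E_e`. -/
def blowDown (M : Matrix ι ι ℤ) (e : ι) : Matrix {i // i ≠ e} {i // i ≠ e} ℤ :=
  fun i k => M i k + M i e * M e k

theorem blowDown_symm (hM : ∀ i k, M i k = M k i) (i k : {i // i ≠ e}) :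
    M.blowDown e i k = M.blowDown e k i := by
  simp only [blowDown, hM i.1 k.1, hM i.1 e, hM e k.1, mul_comm]

theorem blowDown_offDiag_nonneg (hoff : ∀ i k, i ≠ k → 0 ≤ M i k) (i k : {i // i ≠ e})
    (hik : i ≠ k) : 0 ≤ M.blowDown e i k :=
  add_nonneg (hoff _ _ (Subtype.coe_ne_coe.mpr hik))
    (mul_nonneg (hoff _ _ i.2) (hoff _ _ k.2.symm))

theorem blowDown_dualGraph_connected [DecidableEq ι] [Nontrivial ι] (hM : ∀ i k, M i k = M k i)
    (hoff : ∀ i k, i ≠ k → 0 ≤ M i k) (hconn : M.dualGraph.Connected) :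
    (M.blowDown e).dualGraph.Connected := by
  obtain ⟨w, hew⟩ := hconn.preconnected.exists_adj_of_nontrivial e
  rw [dualGraph_adj hM] at hew
  have hw : w ≠ e := hew.1.symm
  have hadj : ∀ i k : {i // i ≠ e}, i ≠ k → 0 < M.blowDown e i k →
      (M.blowDown e).dualGraph.Reachable i k := fun i k hik h =>
    ((dualGraph_adj (blowDown_symm hM)).2 ⟨hik, h⟩).reachable
  -- `f` sends `e` to its neighbour `w`, so that it maps every edge to a path.
  let f : ι → {i // i ≠ e} := fun i => if h : i = e then ⟨w, hw⟩ else ⟨i, h⟩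
  have hstep : ∀ u v, 0 < M u v → (hv : v ≠ e) →
      (M.blowDown e).dualGraph.Reachable (f u) ⟨v, hv⟩ := by
    intro u v huv hv
    by_cases hu : u = e
    · subst hu
      simp only [f, dif_pos rfl]
      by_cases hwv : w = v
      · subst hwv; rfl
      · refine hadj _ _ (by simpa using hwv) ?_
        have := hoff w v hwv
        have := mul_pos (hM w u ▸ hew.2) huv
        simp only [blowDown]; omega
    · simp only [f, dif_neg hu]
      by_cases huv' : u = v
      · subst huv'; rfl
      · refine hadj _ _ (by simpa using huv') ?_
        have := mul_nonneg (hoff u e hu) (hoff e v (Ne.symm hv))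
        simp only [blowDown]; omega
  have hmap : ∀ u v, M.dualGraph.Reachable u v →
      (M.blowDown e).dualGraph.Reachable (f u) (f v) := by
    intro u v h
    rw [SimpleGraph.reachable_iff_reflTransGen] at h ⊢
    refine Relation.ReflTransGen.lift' f (fun a b hab => ?_) u v h
    rw [Function.onFun, ← SimpleGraph.reachable_iff_reflTransGen]
    obtain ⟨hab, hpos⟩ := (dualGraph_adj hM).1 hab
    by_cases hb : b = e
    · have ha : a ≠ e := hb ▸ hab
      simpa only [f, dif_neg ha] using (hstep b a (hM a b ▸ hpos) ha).symm
    · simpa only [f, dif_neg hb] using hstep a b hpos hb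
  have : Nonempty {i // i ≠ e} := ⟨⟨w, hw⟩⟩
  refine ⟨fun x y => ?_⟩
  simpa [f, x.2, y.2] using hmap x y (hconn.preconnected x y)

variable [Fintype ι]

def quadForm (M : Matrix ι ι ℤ) (v : ι → ℝ) : ℝ := ∑ i, ∑ k, v i * M i k * v k

theorem quadForm_sub_quadForm (hM : ∀ i k, M i k = M k i) (x y : ι → ℝ) :
    M.quadForm x - M.quadForm y = ∑ i, ∑ k, (x i - y i) * M i k * (x k + y k) := by
  have hcross : ∑ i, ∑ k, x i * M i k * y k = ∑ i, ∑ k, y i * M i k * x k := by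
    rw [Finset.sum_comm]
    exact sum_congr rfl fun i _ => sum_congr rfl fun k _ => by rw [hM]; ring
  simp only [quadForm, sub_mul, mul_add, Finset.sum_add_distrib, Finset.sum_sub_distrib]
    at hcross ⊢
  linarith

theorem quadForm_nonpos (hneg : ∀ v : ι → ℝ, v ≠ 0 → M.quadForm v < 0) (v : ι → ℝ) :
    M.quadForm v ≤ 0 := by
  rcases eq_or_ne v 0 with rfl | hv
  · simp [quadForm]
  · exact (hneg v hv).le

theorem diag_le_neg_one_of_quadForm_neg [DecidableEq ι]
    (hneg : ∀ v : ι → ℝ, v ≠ 0 → M.quadForm v < 0) (i : ι) : M i i ≤ -1 := by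
  have h : M i i < 0 := by simpa [quadForm, Pi.single_apply] using hneg (Pi.single i 1) (by simp)
  omega

theorem two_mul_card_sub_one_add_trace_le (hM : ∀ i k, M i k = M k i)
    (hoff : ∀ i k, i ≠ k → 0 ≤ M i k) (hconn : M.dualGraph.Connected) :
    2 * ((Fintype.card ι : ℤ) - 1) + M.trace ≤ ∑ i, ∑ k, M i k := by
  classical
  have hdeg : ∀ i, (M.dualGraph.degree i : ℤ) + M i i ≤ ∑ k, M i k := by
    intro i
    rw [← Finset.add_sum_erase _ _ (mem_univ i), add_comm]
    gcongr
    rw [← SimpleGraph.card_neighborFinset_eq_degree, card_eq_sum_ones, Nat.cast_sum]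
    calc ∑ k ∈ M.dualGraph.neighborFinset i, ((1 : ℕ) : ℤ)
        ≤ ∑ k ∈ M.dualGraph.neighborFinset i, M i k := sum_le_sum fun k hk => by
          rw [SimpleGraph.mem_neighborFinset, dualGraph_adj hM] at hk
          exact_mod_cast hk.2
      _ ≤ ∑ k ∈ univ.erase i, M i k := by
        refine sum_le_sum_of_subset_of_nonneg (fun k hk => ?_)
          fun k hk _ => hoff i k (ne_of_mem_erase hk).symm
        rw [SimpleGraph.mem_neighborFinset, dualGraph_adj hM] at hk
        exact mem_erase.2 ⟨hk.1.symm, mem_univ k⟩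
  have hedges : Fintype.card ι ≤ #M.dualGraph.edgeFinset + 1 := by
    simpa [Nat.card_eq_fintype_card, SimpleGraph.edgeFinset_card] using
      hconn.card_vert_le_card_edgeSet_add_one
  have hsum := M.dualGraph.sum_degrees_eq_twice_card_edges
  calc 2 * ((Fintype.card ι : ℤ) - 1) + M.trace
      ≤ ∑ i, ((M.dualGraph.degree i : ℤ) + M i i) := by
        rw [sum_add_distrib, ← Nat.cast_sum, hsum, Matrix.trace]
        push_cast
        simp only [diag_apply]
        omega
    _ ≤ ∑ i, ∑ k, M i k := sum_le_sum fun i _ => hdeg i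

variable [DecidableEq ι]

theorem quadForm_blowDown (hM : ∀ i k, M i k = M k i) (he : M e e = -1) (w : ι → ℝ)
    (hw : w e = ∑ k : {i // i ≠ e}, M e k * w k) :
    (M.blowDown e).quadForm (fun k => w k) = M.quadForm w := by
  have hw' : ∑ i : {i // i ≠ e}, w i * M i e = w e := by
    rw [hw]; exact sum_congr rfl fun i _ => by rw [hM]; ring
  have hcross : ∑ i : {i // i ≠ e}, ∑ k : {i // i ≠ e}, w i * (M i e * M e k : ℝ) * w k =
      (∑ i : {i // i ≠ e}, w i * M i e) * ∑ k : {i // i ≠ e}, M e k * w k := by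
    rw [Finset.sum_mul_sum]
    exact sum_congr rfl fun i _ => sum_congr rfl fun k _ => by ring
  simp only [quadForm, blowDown, Fintype.sum_eq_add_sum_subtype_ne _ e, he, Int.cast_add,
    Int.cast_mul, mul_add, add_mul, Finset.sum_add_distrib]
  rw [hcross, ← Finset.sum_mul, hw', ← hw]
  simp only [mul_assoc, ← Finset.mul_sum, ← hw]
  push_cast
  ring

theorem blowDown_quadForm_neg (hM : ∀ i k, M i k = M k i) (he : M e e = -1)
    (hneg : ∀ v : ι → ℝ, v ≠ 0 → M.quadForm v < 0) (v : {i // i ≠ e} → ℝ) (hv : v ≠ 0) :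
    (M.blowDown e).quadForm v < 0 := by
  let w : ι → ℝ := fun i => if h : i = e then ∑ k : {i // i ≠ e}, M e k * v k else v ⟨i, h⟩
  have hwv : (fun k : {i // i ≠ e} => w k) = v := funext fun k => dif_neg k.2
  have hw : w e = ∑ k : {i // i ≠ e}, M e k * w k := by
    simp only [w, dif_pos rfl]
    exact sum_congr rfl fun k _ => by rw [dif_neg k.2]
  rw [← hwv, quadForm_blowDown hM he w hw]
  exact hneg w fun h => hv (by rw [← hwv, h]; rfl)

end Matrix

theorem intCast_mul_sub_one_nonneg (m : ℤ) : (0 : ℝ) ≤ m * (m - 1) := by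
  have := Int.le_self_sq m
  exact_mod_cast (by nlinarith : (0 : ℤ) ≤ m * (m - 1))

section LcGraph

variable {ι : Type*} [Fintype ι]

/-- `K · E_k`, by adjunction. -/
def canonicalDegree (M : Matrix ι ι ℤ) (g : ι → ℕ) (k : ι) : ℤ := 2 * g k - 2 - M k k

/-- `B · E_k`, read off from `(K + B) · E_k = ∑ i, (a i - 1) (E_i · E_k)`. -/
def boundaryDegree (M : Matrix ι ι ℤ) (g : ι → ℕ) (a : ι → ℝ) (k : ι) : ℝ :=
  ∑ i, (a i - 1) * M i k - canonicalDegree M g k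

structure IsLcGraph (M : Matrix ι ι ℤ) (g : ι → ℕ) (a : ι → ℝ) : Prop where
  symm : ∀ i k, M i k = M k i
  offDiag_nonneg : ∀ i k, i ≠ k → 0 ≤ M i k
  quadForm_neg : ∀ v : ι → ℝ, v ≠ 0 → M.quadForm v < 0
  connected : M.dualGraph.Connected
  discrepancy_nonneg : ∀ i, 0 ≤ a i
  boundaryDegree_nonneg : ∀ k, 0 ≤ boundaryDegree M g a k

variable {M : Matrix ι ι ℤ} {g : ι → ℕ} {a : ι → ℝ} {e : ι}

theorem IsLcGraph.sum_boundaryDegree_le_two_of_canonicalDegree_nonneg (h : IsLcGraph M g a)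
    (hK : ∀ k, 0 ≤ canonicalDegree M g k) : ∑ k, boundaryDegree M g a k ≤ 2 := by
  have hexpand : ∑ k, (a k + 1) * boundaryDegree M g a k =
      M.quadForm a - M.quadForm 1 - ∑ k, (a k + 1) * canonicalDegree M g k := by
    rw [Matrix.quadForm_sub_quadForm h.symm, Finset.sum_comm, ← sum_sub_distrib]
    refine sum_congr rfl fun k _ => ?_
    simp only [boundaryDegree, Pi.one_apply, mul_sub, Finset.mul_sum]
    congr 1
    exact sum_congr rfl fun i _ => by ring
  have hsumK : ∑ k, canonicalDegree M g k =
      2 * ∑ k, (g k : ℤ) - 2 * Fintype.card ι - M.trace := by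
    simp only [canonicalDegree, sum_sub_distrib, ← mul_sum, Matrix.trace, Matrix.diag_apply]
    simp [mul_comm]
  have hedges := Matrix.two_mul_card_sub_one_add_trace_le h.symm h.offDiag_nonneg h.connected
  have hg : 0 ≤ ∑ k, (g k : ℤ) := by positivity
  have hbound : -∑ i, ∑ k, M i k - ∑ k, canonicalDegree M g k ≤ 2 := by omega
  calc ∑ k, boundaryDegree M g a k ≤ ∑ k, (a k + 1) * boundaryDegree M g a k :=
        sum_le_sum fun k _ => le_mul_of_one_le_left (h.boundaryDegree_nonneg k)
          (by linarith [h.discrepancy_nonneg k])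
    _ = M.quadForm a - M.quadForm 1 - ∑ k, (a k + 1) * canonicalDegree M g k := hexpand
    _ ≤ -M.quadForm 1 - ∑ k, (canonicalDegree M g k : ℝ) := by
        have hqa := M.quadForm_nonpos h.quadForm_neg a
        have : ∑ k, (canonicalDegree M g k : ℝ) ≤ ∑ k, (a k + 1) * canonicalDegree M g k :=
          sum_le_sum fun k _ => le_mul_of_one_le_left (by exact_mod_cast hK k)
            (by linarith [h.discrepancy_nonneg k])
        linarith
    _ ≤ 2 := by
        simp only [Matrix.quadForm, Pi.one_apply, one_mul, mul_one]
        exact_mod_cast hbound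

theorem sum_boundaryDegree_le_two_of_subsingleton [Subsingleton ι] (ha : 0 ≤ a e)
    (hg : g e = 0) (he : M e e = -1) : ∑ k, boundaryDegree M g a k ≤ 2 := by
  simp only [Fintype.sum_subsingleton _ e, boundaryDegree, canonicalDegree, hg, he]
  push_cast
  linarith

variable [DecidableEq ι]

theorem boundaryDegree_blowDown (hM : ∀ i k, M i k = M k i) (hg : g e = 0) (he : M e e = -1)
    (k : {i // i ≠ e}) :
    boundaryDegree (M.blowDown e) (fun i => g i) (fun i => a i) k =
      boundaryDegree M g a k + M k e * boundaryDegree M g a e + M k e * (M k e - 1) := by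
  have hsplit : ∑ i : {i // i ≠ e}, (a i - 1) * (M i k + M i e * M k e : ℝ) =
      ∑ i : {i // i ≠ e}, (a i - 1) * M i k +
        (∑ i : {i // i ≠ e}, (a i - 1) * M i e) * M k e := by
    rw [Finset.sum_mul, ← sum_add_distrib]
    exact sum_congr rfl fun i _ => by ring
  simp only [boundaryDegree, canonicalDegree, Matrix.blowDown,
    Fintype.sum_eq_add_sum_subtype_ne _ e, hg, he, hM e k]
  push_cast
  rw [hsplit]
  ring

theorem IsLcGraph.blowDown [Nontrivial ι] (h : IsLcGraph M g a) (hg : g e = 0)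
    (he : M e e = -1) : IsLcGraph (M.blowDown e) (fun i => g i) (fun i => a i) where
  symm := Matrix.blowDown_symm h.symm
  offDiag_nonneg := Matrix.blowDown_offDiag_nonneg h.offDiag_nonneg
  quadForm_neg := Matrix.blowDown_quadForm_neg h.symm he h.quadForm_neg
  connected := Matrix.blowDown_dualGraph_connected h.symm h.offDiag_nonneg h.connected
  discrepancy_nonneg i := h.discrepancy_nonneg i
  boundaryDegree_nonneg k := by
    rw [boundaryDegree_blowDown h.symm hg he]
    have hm : (0 : ℝ) ≤ M k e := by exact_mod_cast h.offDiag_nonneg _ _ k.2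
    have hck := h.boundaryDegree_nonneg k
    have hce := mul_nonneg hm (h.boundaryDegree_nonneg e)
    linarith [intCast_mul_sub_one_nonneg (M k e)]

theorem IsLcGraph.sum_boundaryDegree_le_blowDown [Nontrivial ι] (h : IsLcGraph M g a)
    (hg : g e = 0) (he : M e e = -1) :
    ∑ k, boundaryDegree M g a k ≤
      ∑ k, boundaryDegree (M.blowDown e) (fun i => g i) (fun i => a i) k := by
  obtain ⟨w, hew⟩ := h.connected.preconnected.exists_adj_of_nontrivial e
  rw [Matrix.dualGraph_adj h.symm] at hew
  have hdeg : (1 : ℝ) ≤ ∑ k : {i // i ≠ e}, (M k e : ℝ) :=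
    calc (1 : ℝ) ≤ M w e := by exact_mod_cast h.symm e w ▸ hew.2
      _ ≤ ∑ k : {i // i ≠ e}, (M k e : ℝ) :=
        single_le_sum (f := fun k : {i // i ≠ e} => (M k e : ℝ))
          (fun k _ => by exact_mod_cast h.offDiag_nonneg _ _ k.2) (mem_univ ⟨w, hew.1.symm⟩)
  have hsq : 0 ≤ ∑ k : {i // i ≠ e}, (M k e : ℝ) * (M k e - 1) :=
    sum_nonneg fun k _ => intCast_mul_sub_one_nonneg (M k e)
  have hce := mul_le_mul_of_nonneg_right hdeg (h.boundaryDegree_nonneg e)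
  rw [Fintype.sum_eq_add_sum_subtype_ne _ e]
  simp only [boundaryDegree_blowDown h.symm hg he, sum_add_distrib, ← sum_mul]
  linarith

theorem IsLcGraph.sum_boundaryDegree_le_two (h : IsLcGraph M g a) :
    ∑ k, boundaryDegree M g a k ≤ 2 := by
  induction hn : Fintype.card ι using Nat.strong_induction_on generalizing ι with
  | _ n ih =>
    by_cases hcurve : ∃ e, g e = 0 ∧ M e e = -1
    · obtain ⟨e, hg, he⟩ := hcurve
      rcases subsingleton_or_nontrivial ι with hι | hι
      · exact sum_boundaryDegree_le_two_of_subsingleton (h.discrepancy_nonneg e) hg he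
      · calc _ ≤ _ := h.sum_boundaryDegree_le_blowDown hg he
          _ ≤ 2 := ih _ (hn ▸ Fintype.card_subtype_lt (not_not_intro rfl)) (h.blowDown hg he) rfl
    · refine h.sum_boundaryDegree_le_two_of_canonicalDegree_nonneg fun k => ?_
      have hdiag := M.diag_le_neg_one_of_quadForm_neg h.quadForm_neg k
      have hnot := not_and.1 (not_exists.1 hcurve k)
      simp only [canonicalDegree]
      omega

end LcGraph

namespace WGraph

theorem extc_nonneg (Γ : WGraph) (i : Fin Γ.n) : 0 ≤ Γ.extc i :=
  sum_nonneg fun j _ => mul_nonneg (Γ.b_pos j).le (Nat.cast_nonneg _)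

theorem boundaryDegree_eq_extc {Γ : WGraph} {a : Fin Γ.n → ℝ} (ha : Γ.IsDiscr a) (k : Fin Γ.n) :
    boundaryDegree Γ.M Γ.g a k = Γ.extc k := by
  have := ha k
  simp only [boundaryDegree, canonicalDegree, sub_mul, one_mul, sum_sub_distrib]
  push_cast
  linarith

theorem sum_b_le_sum_extc {Γ : WGraph} (hattached : ∀ j, 1 ≤ ∑ i, Γ.t j i) :
    ∑ j, Γ.b j ≤ ∑ i, Γ.extc i := by
  simp only [extc]
  rw [sum_comm]
  refine sum_le_sum fun j _ => ?_
  rw [← mul_sum]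
  exact le_mul_of_one_le_right (Γ.b_pos j).le (by exact_mod_cast hattached j)

theorem isLcGraph {Γ : WGraph} (hconn : Γ.Connected) (hell : Γ.Elliptic) {a : Fin Γ.n → ℝ}
    (ha : Γ.IsDiscr a) (hlc : ∀ i, 0 ≤ a i) : IsLcGraph Γ.M Γ.g a where
  symm := Γ.symm
  offDiag_nonneg := Γ.offdiag_nonneg
  quadForm_neg := hell
  connected := hconn
  discrepancy_nonneg := hlc
  boundaryDegree_nonneg k := by
    rw [boundaryDegree_eq_extc ha]
    exact_mod_cast Γ.extc_nonneg k

end WGraph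

/-- **Local boundedness.** For a connected elliptic log canonical weighted
graph in which every external component is attached (`∑_i t_{ji} ≥ 1` for every `j`), the sum
of the external coefficients satisfies `∑_j b_j ≤ 2`. -/
theorem local_boundedness (Γ : WGraph) (hconn : Γ.Connected) (hell : Γ.Elliptic)
    (a : Fin Γ.n → ℝ) (ha : Γ.IsDiscr a) (hlc : ∀ i, 0 ≤ a i)
    (hattached : ∀ j, 1 ≤ ∑ i, Γ.t j i) :
    ∑ j, Γ.b j ≤ 2 := by
  have hsum := (WGraph.isLcGraph hconn hell ha hlc).sum_boundaryDegree_le_two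
  simp only [WGraph.boundaryDegree_eq_extc ha] at hsum
  exact (WGraph.sum_b_le_sum_extc hattached).trans (by exact_mod_cast hsum)
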